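/- Let X = {x₁² + x₂x₃ + x₄x₅ = 0} ⊂ ℙ⁴(ℂ), and consider ε₂ = diag(1,−1,−1,1,1), ε₃ = diag(1,1,1,−1,−1), and m : (x₁,…,x₅) ↦ (x₁, d₁x₃, d₁⁻¹x₂, d₂x₅, d₂⁻¹x₄) for fixed d₁, d₂ ∈ ℂ*. Then ε₂, ε₃, and m induce pairwise commuting involutions in PGL₅(ℂ), and no point of X is simultaneously fixed by all three. -/
import Mathlib

set_option maxHeartbeats 1000000 in
/-- ε₂ = diag(1,−1,−1,1,1), ε₃ = diag(1,1,1,−1,−1) and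
m : (x₁,…,x₅) ↦ (x₁,d₁x₃,d₁⁻¹x₂,d₂x₅,d₂⁻¹x₄) induce pairwise commuting
involutions in PGL₅(ℂ) (they square to the identity, commute, and are not
scalar) with no common fixed point on the quadric {x₁²+x₂x₃+x₄x₅ = 0}. -/
theorem stmt_17 (d₁ d₂ : ℂ) (h₁ : d₁ ≠ 0) (h₂ : d₂ ≠ 0) :
    let E₂ : Matrix (Fin 5) (Fin 5) ℂ := Matrix.diagonal ![1, -1, -1, 1, 1]
    let E₃ : Matrix (Fin 5) (Fin 5) ℂ := Matrix.diagonal ![1, 1, 1, -1, -1]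
    let M : Matrix (Fin 5) (Fin 5) ℂ :=
      Matrix.of ![![1,0,0,0,0], ![0,0,d₁,0,0], ![0,d₁⁻¹,0,0,0],
        ![0,0,0,0,d₂], ![0,0,0,d₂⁻¹,0]]
    (E₂ ^ 2 = 1 ∧ E₃ ^ 2 = 1 ∧ M ^ 2 = 1) ∧
    (E₂ * E₃ = E₃ * E₂ ∧ E₂ * M = M * E₂ ∧ E₃ * M = M * E₃) ∧
    (∀ c : ℂ, E₂ ≠ c • (1 : Matrix (Fin 5) (Fin 5) ℂ) ∧
      E₃ ≠ c • (1 : Matrix (Fin 5) (Fin 5) ℂ) ∧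
      M ≠ c • (1 : Matrix (Fin 5) (Fin 5) ℂ)) ∧
    (∀ v : Fin 5 → ℂ, v ≠ 0 → (v 0) ^ 2 + v 1 * v 2 + v 3 * v 4 = 0 →
      ¬ ((∃ c : ℂ, E₂.mulVec v = c • v) ∧ (∃ c : ℂ, E₃.mulVec v = c • v) ∧
         (∃ c : ℂ, M.mulVec v = c • v))) := by
  intro E₂ E₃ M
  have hd1 : d₁ * d₁⁻¹ = 1 := mul_inv_cancel₀ h₁
  have hd1' : d₁⁻¹ * d₁ = 1 := inv_mul_cancel₀ h₁
  have hd2 : d₂ * d₂⁻¹ = 1 := mul_inv_cancel₀ h₂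
  have hd2' : d₂⁻¹ * d₂ = 1 := inv_mul_cancel₀ h₂
  refine ⟨⟨?_, ?_, ?_⟩, ⟨?_, ?_, ?_⟩, ?_, ?_⟩
  · show Matrix.diagonal _ ^ 2 = 1
    rw [pow_two, Matrix.diagonal_mul_diagonal, ← Matrix.diagonal_one]
    exact congrArg Matrix.diagonal (funext fun i => by fin_cases i <;> simp)
  · show Matrix.diagonal _ ^ 2 = 1
    rw [pow_two, Matrix.diagonal_mul_diagonal, ← Matrix.diagonal_one]
    exact congrArg Matrix.diagonal (funext fun i => by fin_cases i <;> simp)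
  · rw [pow_two]
    ext i j; fin_cases i <;> fin_cases j <;>
      simp [M, Matrix.mul_apply, Fin.sum_univ_five, Matrix.one_apply,
        hd1, hd1', hd2, hd2', Matrix.vecHead, Matrix.vecTail]
  · show Matrix.diagonal _ * Matrix.diagonal _ = Matrix.diagonal _ * Matrix.diagonal _
    rw [Matrix.diagonal_mul_diagonal, Matrix.diagonal_mul_diagonal]
    exact congrArg Matrix.diagonal (funext fun i => by fin_cases i <;> simp)
  · ext i j; fin_cases i <;> fin_cases j <;>
      simp [E₂, M, Matrix.diagonal_mul, Matrix.mul_diagonal,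
        Matrix.vecHead, Matrix.vecTail]
  · ext i j; fin_cases i <;> fin_cases j <;>
      simp [E₃, M, Matrix.diagonal_mul, Matrix.mul_diagonal,
        Matrix.vecHead, Matrix.vecTail]
  · intro c
    refine ⟨fun h => ?_, fun h => ?_, fun h => ?_⟩
    · have h00 := congrFun (congrFun h 0) 0
      have h11 := congrFun (congrFun h 1) 1
      simp [E₂, Matrix.diagonal_apply, Matrix.one_apply] at h00 h11
      rw [← h00] at h11; norm_num at h11
    · have h00 := congrFun (congrFun h 0) 0
      have h33 := congrFun (congrFun h 3) 3
      simp [E₃, Matrix.diagonal_apply, Matrix.one_apply] at h00 h33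
      rw [← h00] at h33; norm_num at h33
    · have h00 := congrFun (congrFun h 0) 0
      have h11 := congrFun (congrFun h 1) 1
      simp [M, Matrix.one_apply, Matrix.vecHead, Matrix.vecTail] at h00 h11
      rw [← h00] at h11; norm_num at h11
  · rintro v hv hq ⟨⟨a, ha⟩, ⟨b, hb⟩, ⟨c, hc⟩⟩
    have ha0 := congrFun ha 0
    have ha1 := congrFun ha 1
    have ha3 := congrFun ha 3
    have ha4 := congrFun ha 4
    have hb0 := congrFun hb 0
    have hb3 := congrFun hb 3
    have hc1 := congrFun hc 1
    have hc2 := congrFun hc 2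
    have hc3 := congrFun hc 3
    have hc4 := congrFun hc 4
    simp [E₂, E₃, M, Matrix.mulVec_diagonal, Matrix.mulVec, dotProduct,
      Fin.sum_univ_five, Matrix.vecHead,
      Matrix.vecTail] at ha0 ha1 ha3 ha4 hb0 hb3 hc1 hc2 hc3 hc4
    have hinv1 : d₁⁻¹ ≠ 0 := inv_ne_zero h₁
    have hinv2 : d₂⁻¹ ≠ 0 := inv_ne_zero h₂
    by_cases hv1 : v 1 = 0
    · have hv2 : v 2 = 0 := by
        have h0 : d₁ * v 2 = 0 := by rw [hc1, hv1, mul_zero]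
        exact (mul_eq_zero.1 h0).resolve_left h₁
      by_cases hv3 : v 3 = 0
      · have hv4 : v 4 = 0 := by
          have h0 : d₂ * v 4 = 0 := by rw [hc3, hv3, mul_zero]
          exact (mul_eq_zero.1 h0).resolve_left h₂
        have hv0 : v 0 = 0 := by
          have h0 : v 0 ^ 2 = 0 := by
            rw [hv1, hv3] at hq; linear_combination hq
          exact pow_eq_zero_iff (two_ne_zero) |>.1 h0
        exact hv (funext fun i => by fin_cases i <;> assumption)
      · have hb' : b = -1 := by
          have h0 : (b + 1) * v 3 = 0 := by linear_combination -hb3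
          have := (mul_eq_zero.1 h0).resolve_right hv3
          linear_combination this
        have hv0 : v 0 = 0 := by
          have h0 : (2 : ℂ) * v 0 = 0 := by
            rw [hb'] at hb0; linear_combination hb0
          exact (mul_eq_zero.1 h0).resolve_left two_ne_zero
        have hv4 : v 4 = 0 := by
          have h0 : v 3 * v 4 = 0 := by
            rw [hv0, hv1] at hq; linear_combination hq
          exact (mul_eq_zero.1 h0).resolve_left hv3
        have hc0 : c = 0 := by
          have h0 : c * v 3 = 0 := by rw [← hc3, hv4, mul_zero]
          exact (mul_eq_zero.1 h0).resolve_right hv3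
        have : d₂⁻¹ * v 3 = 0 := by rw [hc4, hc0, zero_mul]
        exact hv3 ((mul_eq_zero.1 this).resolve_left hinv2)
    · have ha' : a = -1 := by
        have h0 : (a + 1) * v 1 = 0 := by linear_combination -ha1
        have := (mul_eq_zero.1 h0).resolve_right hv1
        linear_combination this
      have hv0 : v 0 = 0 := by
        have h0 : (2 : ℂ) * v 0 = 0 := by
          rw [ha'] at ha0; linear_combination ha0
        exact (mul_eq_zero.1 h0).resolve_left two_ne_zero
      have hv3 : v 3 = 0 := by
        have h0 : (2 : ℂ) * v 3 = 0 := by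
          rw [ha'] at ha3; linear_combination ha3
        exact (mul_eq_zero.1 h0).resolve_left two_ne_zero
      have hv4 : v 4 = 0 := by
        have h0 : (2 : ℂ) * v 4 = 0 := by
          rw [ha'] at ha4; linear_combination ha4
        exact (mul_eq_zero.1 h0).resolve_left two_ne_zero
      have hv2 : v 2 = 0 := by
        have h0 : v 1 * v 2 = 0 := by
          rw [hv0, hv3] at hq; linear_combination hq
        exact (mul_eq_zero.1 h0).resolve_left hv1
      have hc0 : c = 0 := by
        have h0 : c * v 1 = 0 := by rw [← hc1, hv2, mul_zero]
        exact (mul_eq_zero.1 h0).resolve_right hv1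
      have : d₁⁻¹ * v 1 = 0 := by rw [hc2, hc0, zero_mul]
      exact hv1 ((mul_eq_zero.1 this).resolve_left hinv1)
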